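/- arXiv:1606.09298 — 4 statements merged into one kernel-verified Lean document; each statement's English description precedes it below -/
import Mathlib

section
/- Let A ∈ ℝ^{p×n}, b ∈ ℝᵖ, μ > 0, f : ℝⁿ → ℝ convex differentiable, and let (x*, λ*) satisfy ∇f(x*) + (1/μ)Aᵀ(Ax* − b) + Aᵀλ* = 0 and Ax* = b. Define L(x, λ) = f(x) + (1/(2μ))‖Ax − b‖² + ⟨λ, Ax − b⟩ and V(x, λ) = f(x) − f(x*) + (1/(2μ))‖Ax − b‖² + ⟨λ, Ax − b⟩ + (1/2)(‖x − x*‖² + ‖λ − λ*‖²). Then for all (x, λ): V(x, λ) ≥ (1/2)⟨P(x − x*, λ − λ*), (x − x*, λ − λ*)⟩ where P = [[(1/μ)AᵀA + Iₙ, Aᵀ], [A, I_p]]. In particular, for μ ∈ (0,1], V(x, λ) ≥ (λ_min(P)/2)(‖x − x*‖² + ‖λ − λ*‖²) with λ_min(P) > 0. -/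
/-!
Convexity gives `f x - f x* ≥ ⟨∇f(x*), x - x*⟩ = -⟨λ*, A(x - x*)⟩`, since stationarity together
with `A x* = b` says `∇f(x*) = -Aᵀλ*`. Substituting `A x - b = A(x - x*)`, the remaining terms of
`V` are exactly half the quadratic form of `P`. For `1/μ ≥ 1` that form dominates
`‖u‖² + ‖A u + w‖²`, and since `w = (A u + w) - A u` this in turn controls `‖u‖² + ‖w‖²`, with a
constant depending only on the Frobenius norm of `A`.
-/

open Matrix

variable {m k R : Type*} [Fintype m] [Fintype k]

lemma dotProduct_self_nonneg [Ring R] [LinearOrder R] [IsStrictOrderedRing R] (v : m → R) :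
    0 ≤ v ⬝ᵥ v :=
  Finset.sum_nonneg fun i _ => mul_self_nonneg (v i)

lemma dotProduct_sub_self_le [CommRing R] [LinearOrder R] [IsStrictOrderedRing R]
    (a b : m → R) : (a - b) ⬝ᵥ (a - b) ≤ 2 * (a ⬝ᵥ a) + 2 * (b ⬝ᵥ b) := by
  have h := dotProduct_self_nonneg (a + b)
  simp only [add_dotProduct, dotProduct_add, sub_dotProduct, dotProduct_sub,
    dotProduct_comm b a] at h ⊢
  linarith

lemma mulVec_dotProduct_mulVec_self_le (A : Matrix k m ℝ) (u : m → ℝ) :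
    A *ᵥ u ⬝ᵥ A *ᵥ u ≤ (∑ i, ∑ j, A i j ^ 2) * (u ⬝ᵥ u) := by
  simp only [dotProduct, mulVec, ← sq]
  rw [Finset.sum_mul]
  exact Finset.sum_le_sum fun i _ => Finset.sum_mul_sq_le_sq_mul_sq _ _ _

def lyapunovMatrix [CommRing R] [DecidableEq m] [DecidableEq k] (c : R) (A : Matrix k m R) :
    Matrix (m ⊕ k) (m ⊕ k) R :=
  fromBlocks (c • (Aᵀ * A) + 1) Aᵀ A 1

section lyapunovMatrix

variable [DecidableEq m] [DecidableEq k]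

lemma lyapunovMatrix_quadForm [CommRing R] (c : R) (A : Matrix k m R) (u : m → R) (w : k → R) :
    lyapunovMatrix c A *ᵥ Sum.elim u w ⬝ᵥ Sum.elim u w
      = c * (A *ᵥ u ⬝ᵥ A *ᵥ u) + u ⬝ᵥ u + 2 * (w ⬝ᵥ A *ᵥ u) + w ⬝ᵥ w := by
  simp only [lyapunovMatrix, fromBlocks_mulVec, Sum.elim_comp_inl, Sum.elim_comp_inr,
    sumElim_dotProduct_sumElim, add_mulVec, smul_mulVec, one_mulVec, ← mulVec_mulVec,
    add_dotProduct, smul_dotProduct, smul_eq_mul, mulVec_transpose, ← dotProduct_mulVec,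
    dotProduct_comm (A *ᵥ u) w]
  ring

lemma lyapunovMatrix_quadForm_ge [CommRing R] [LinearOrder R] [IsStrictOrderedRing R]
    {c : R} (hc : 1 ≤ c) (A : Matrix k m R) (u : m → R) (w : k → R) :
    u ⬝ᵥ u + (A *ᵥ u + w) ⬝ᵥ (A *ᵥ u + w) ≤ lyapunovMatrix c A *ᵥ Sum.elim u w ⬝ᵥ Sum.elim u w := by
  have hAu := dotProduct_self_nonneg (A *ᵥ u)
  rw [lyapunovMatrix_quadForm]
  simp only [add_dotProduct, dotProduct_add, dotProduct_comm (A *ᵥ u) w]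
  nlinarith

lemma lyapunovMatrix_coercive {c : ℝ} (hc : 1 ≤ c) (A : Matrix k m ℝ) :
    ∃ κ > (0 : ℝ), ∀ u w,
      κ * (u ⬝ᵥ u + w ⬝ᵥ w) ≤ lyapunovMatrix c A *ᵥ Sum.elim u w ⬝ᵥ Sum.elim u w := by
  set M := ∑ i, ∑ j, A i j ^ 2
  have hM : 0 ≤ M := by positivity
  refine ⟨1 / (2 + 2 * M), by positivity, fun u w => ?_⟩
  have hQ := lyapunovMatrix_quadForm_ge hc A u w
  have hw : w ⬝ᵥ w ≤ 2 * ((A *ᵥ u + w) ⬝ᵥ (A *ᵥ u + w)) + 2 * (A *ᵥ u ⬝ᵥ A *ᵥ u) := by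
    simpa using dotProduct_sub_self_le (A *ᵥ u + w) (A *ᵥ u)
  have hAu := mulVec_dotProduct_mulVec_self_le A u
  have hu := dotProduct_self_nonneg u
  have hv := dotProduct_self_nonneg (A *ᵥ u + w)
  rw [div_mul_eq_mul_div, one_mul, div_le_iff₀ (by positivity)]
  nlinarith

lemma lyapunovMatrix_posDef {c : ℝ} (hc : 1 ≤ c) (A : Matrix k m ℝ) :
    (lyapunovMatrix c A).PosDef := by
  refine .of_dotProduct_mulVec_pos ?_ fun v hv => ?_
  · refine .fromBlocks ?_ (by simp) (by simp)
    simp [IsHermitian, transpose_mul]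
  · obtain ⟨κ, hκ, hcoer⟩ := lyapunovMatrix_coercive hc A
    have hpos : 0 < v ⬝ᵥ v :=
      (dotProduct_self_nonneg v).lt_of_ne' (dotProduct_self_eq_zero.not.mpr hv)
    have h := hcoer (v ∘ Sum.inl) (v ∘ Sum.inr)
    rw [← sumElim_dotProduct_sumElim, Sum.elim_comp_inl_inr] at h
    rw [star_trivial, dotProduct_comm]
    exact (mul_pos hκ hpos).trans_le h

end lyapunovMatrix

lemma lagrangian_le_of_stationary {f : (m → ℝ) → ℝ} {g : m → ℝ} {xs : m → ℝ}
    (hgrad : ∀ y, f y ≥ f xs + g ⬝ᵥ (y - xs)) {A : Matrix k m ℝ} {lams : k → ℝ}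
    (hstat : g = -(Aᵀ *ᵥ lams)) (x : m → ℝ) :
    f xs ≤ f x + lams ⬝ᵥ A *ᵥ (x - xs) := by
  have h := hgrad x
  rw [hstat, neg_dotProduct, mulVec_transpose, ← dotProduct_mulVec] at h
  linarith

theorem lyapunov_lower_quadratic_bound_general {n p : ℕ}
    (f : (Fin n → ℝ) → ℝ) (f' : (Fin n → ℝ) → (Fin n → ℝ))
    (hgrad : ∀ z y : Fin n → ℝ, f y ≥ f z + f' z ⬝ᵥ (y - z))
    (A : Matrix (Fin p) (Fin n) ℝ) (b : Fin p → ℝ)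
    (μ : ℝ) (hμ : 0 < μ)
    (xs : Fin n → ℝ) (lams : Fin p → ℝ)
    (hstat : f' xs + (1 / μ) • Aᵀ.mulVec (A.mulVec xs - b) + Aᵀ.mulVec lams = 0)
    (hfeas : A.mulVec xs = b)
    (V : (Fin n → ℝ) → (Fin p → ℝ) → ℝ)
    (hV : ∀ x lam, V x lam = f x - f xs
      + (1 / (2 * μ)) * ((A.mulVec x - b) ⬝ᵥ (A.mulVec x - b))
      + lam ⬝ᵥ (A.mulVec x - b)
      + (1 / 2) * ((x - xs) ⬝ᵥ (x - xs) + (lam - lams) ⬝ᵥ (lam - lams)))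
    (P : Matrix (Fin n ⊕ Fin p) (Fin n ⊕ Fin p) ℝ)
    (hP : P = Matrix.fromBlocks ((1 / μ) • (Aᵀ * A) + 1) Aᵀ A 1) :
    (∀ x lam, V x lam ≥ (1 / 2) *
      (P.mulVec (Sum.elim (x - xs) (lam - lams)) ⬝ᵥ Sum.elim (x - xs) (lam - lams))) ∧
    (μ ≤ 1 → P.PosDef ∧ ∃ c > (0 : ℝ), ∀ x lam,
      V x lam ≥ (c / 2) * ((x - xs) ⬝ᵥ (x - xs) + (lam - lams) ⬝ᵥ (lam - lams))) := by
  replace hP : P = lyapunovMatrix (1 / μ) A := hP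
  have hgrad_xs : f' xs = -(Aᵀ *ᵥ lams) := by
    rw [hfeas, sub_self, mulVec_zero, smul_zero, add_zero] at hstat
    exact eq_neg_of_add_eq_zero_left hstat
  have hbound : ∀ x lam, V x lam ≥ (1 / 2) *
      (P *ᵥ Sum.elim (x - xs) (lam - lams) ⬝ᵥ Sum.elim (x - xs) (lam - lams)) := by
    intro x lam
    have hmin := lagrangian_le_of_stationary (hgrad xs) hgrad_xs x
    rw [hV, hP, lyapunovMatrix_quadForm, ← hfeas, ← mulVec_sub,
      sub_dotProduct lam lams (A *ᵥ (x - xs))]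
    linear_combination hmin
  refine ⟨hbound, fun hμ1 => ?_⟩
  have hc : 1 ≤ 1 / μ := one_le_one_div hμ hμ1
  obtain ⟨κ, hκ, hcoer⟩ := lyapunovMatrix_coercive hc A
  refine ⟨hP ▸ lyapunovMatrix_posDef hc A, κ, hκ, fun x lam => ?_⟩
  have hlower := hcoer (x - xs) (lam - lams)
  have hV_ge := hbound x lam
  rw [hP] at hV_ge
  linarith

theorem lyapunov_lower_quadratic_bound {n p : ℕ}
    (f : (Fin n → ℝ) → ℝ) (f' : (Fin n → ℝ) → (Fin n → ℝ))
    (hconv : ConvexOn ℝ Set.univ f)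
    (hgrad : ∀ z y : Fin n → ℝ, f y ≥ f z + f' z ⬝ᵥ (y - z))
    (A : Matrix (Fin p) (Fin n) ℝ) (b : Fin p → ℝ)
    (μ : ℝ) (hμ : 0 < μ)
    (xs : Fin n → ℝ) (lams : Fin p → ℝ)
    (hstat : f' xs + (1 / μ) • Aᵀ.mulVec (A.mulVec xs - b) + Aᵀ.mulVec lams = 0)
    (hfeas : A.mulVec xs = b)
    (V : (Fin n → ℝ) → (Fin p → ℝ) → ℝ)
    (hV : ∀ x lam, V x lam = f x - f xs
      + (1 / (2 * μ)) * ((A.mulVec x - b) ⬝ᵥ (A.mulVec x - b))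
      + lam ⬝ᵥ (A.mulVec x - b)
      + (1 / 2) * ((x - xs) ⬝ᵥ (x - xs) + (lam - lams) ⬝ᵥ (lam - lams)))
    (P : Matrix (Fin n ⊕ Fin p) (Fin n ⊕ Fin p) ℝ)
    (hP : P = Matrix.fromBlocks ((1 / μ) • (Aᵀ * A) + 1) Aᵀ A 1) :
    (∀ x lam, V x lam ≥ (1 / 2) *
      (P.mulVec (Sum.elim (x - xs) (lam - lams)) ⬝ᵥ Sum.elim (x - xs) (lam - lams))) ∧
    (μ ≤ 1 → P.PosDef ∧ ∃ c > (0 : ℝ), ∀ x lam,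
      V x lam ≥ (c / 2) * ((x - xs) ⬝ᵥ (x - xs) + (lam - lams) ⬝ᵥ (lam - lams))) :=
  lyapunov_lower_quadratic_bound_general f f' hgrad A b μ hμ xs lams hstat hfeas V hV P hP
end

section
/- Let A ∈ ℝ^{p×n} have full row rank p, μ ∈ (0,1), and H ∈ ℝ^{n×n} be symmetric positive definite. Then the block matrix Q = [[ H + (H + (1/μ)AᵀA)ᵀ(H + (1/μ)AᵀA) + ((1/μ)−1)AᵀA , HᵀAᵀ + (1/μ)AᵀAAᵀ ], [ AH + (1/μ)AAᵀA , AAᵀ ]] is symmetric positive definite. -/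
/-!
With `B = H + μ⁻¹ AᵀA` and `X = H + (μ⁻¹ - 1) AᵀA`, the matrix factors as `Q = Gᵀ diag(X, I) G`
with `G = [[I, 0], [B, Aᵀ]]`, i.e. `xᵀ Q x = x₁ᵀ X x₁ + ‖B x₁ + Aᵀ x₂‖²`. Since `μ < 1`, `X` is
`H` plus a positive semidefinite matrix, hence positive definite; and `G` is injective because
`Aᵀ` is, `A` having full row rank.
-/

open Matrix

namespace Matrix

variable {m n k R : Type*} [Fintype m] [Fintype n] [CommRing R]

theorem vecMul_injective_of_rank_eq_card {K : Type*} [Field K] {A : Matrix m n K}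
    (hA : A.rank = Fintype.card m) : Function.Injective A.vecMul :=
  vecMul_injective_iff.mpr <| linearIndependent_iff_card_eq_finrank_span.mpr <| by
    rw [Set.finrank, ← rank_eq_finrank_span_row, hA]

theorem fromBlocks_one_zero_mulVec_injective [DecidableEq m] (B : Matrix k m R)
    {C : Matrix k n R} (hC : Function.Injective C.mulVec) :
    Function.Injective (fromBlocks (1 : Matrix m m R) 0 B C).mulVec := by
  rw [← coe_mulVecLin, injective_iff_map_eq_zero]
  intro x hx
  obtain ⟨x₁, x₂, rfl⟩ : ∃ x₁ x₂, x = Sum.elim x₁ x₂ := ⟨_, _, (Sum.elim_comp_inl_inr x).symm⟩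
  simp only [mulVecLin_apply, fromBlocks_mulVec, Sum.elim_comp_inl, Sum.elim_comp_inr,
    one_mulVec, Matrix.zero_mulVec, add_zero] at hx
  obtain rfl : x₁ = 0 := funext fun i => congrFun hx (.inl i)
  have hx₂ : C *ᵥ x₂ = C *ᵥ 0 := by
    ext j
    simpa using congrFun hx (.inr j)
  rw [hC hx₂, Sum.elim_zero_zero]

variable [PartialOrder R] [StarRing R] [StarOrderedRing R]

theorem PosDef.fromBlocks_zero {X : Matrix m m R} {Y : Matrix n n R}
    (hX : X.PosDef) (hY : Y.PosDef) : (fromBlocks X 0 0 Y).PosDef := by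
  refine .of_dotProduct_mulVec_pos (hX.isHermitian.fromBlocks (by simp) hY.isHermitian)
    fun x hx => ?_
  obtain ⟨x₁, x₂, rfl⟩ : ∃ x₁ x₂, x = Sum.elim x₁ x₂ := ⟨_, _, (Sum.elim_comp_inl_inr x).symm⟩
  simp only [fromBlocks_mulVec, Matrix.zero_mulVec, add_zero, zero_add, Function.star_sumElim,
    sumElim_dotProduct_sumElim, Sum.elim_comp_inl, Sum.elim_comp_inr]
  by_cases h₁ : x₁ = 0
  · have h₂ : x₂ ≠ 0 := by rintro rfl; exact hx (by simp [h₁])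
    simpa [h₁] using hY.dotProduct_mulVec_pos h₂
  · exact add_pos_of_pos_of_nonneg (hX.dotProduct_mulVec_pos h₁)
      (hY.posSemidef.dotProduct_mulVec_nonneg x₂)

theorem PosDef.fromBlocks_add_conjTranspose_mul [Fintype k] [NoZeroDivisors R]
    {X : Matrix m m R} (hX : X.PosDef) (B : Matrix k m R) {C : Matrix k n R}
    (hC : Function.Injective C.mulVec) :
    (fromBlocks (X + Bᴴ * B) (Bᴴ * C) (Cᴴ * B) (Cᴴ * C)).PosDef := by
  classical
  set G : Matrix (m ⊕ k) (m ⊕ n) R := fromBlocks 1 0 B C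
  have hfactor : fromBlocks (X + Bᴴ * B) (Bᴴ * C) (Cᴴ * B) (Cᴴ * C) =
      Gᴴ * (fromBlocks X 0 0 1 : Matrix (m ⊕ k) (m ⊕ k) R) * G := by
    simp [G, fromBlocks_conjTranspose, fromBlocks_multiply]
  rw [hfactor]
  exact (hX.fromBlocks_zero PosDef.one).conjTranspose_mul_mul_same
    (fromBlocks_one_zero_mulVec_injective B hC)

end Matrix

theorem blockMatrix_Q_posDef {n p : ℕ}
    (A : Matrix (Fin p) (Fin n) ℝ) (hA : A.rank = p)
    (μ : ℝ) (hμ0 : 0 < μ) (hμ1 : μ < 1)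
    (H : Matrix (Fin n) (Fin n) ℝ) (hH : H.PosDef) :
    (Matrix.fromBlocks
      (H + (H + (1 / μ) • (Aᵀ * A))ᵀ * (H + (1 / μ) • (Aᵀ * A))
        + (1 / μ - 1) • (Aᵀ * A))
      (Hᵀ * Aᵀ + (1 / μ) • (Aᵀ * A * Aᵀ))
      (A * H + (1 / μ) • (A * Aᵀ * A))
      (A * Aᵀ)).PosDef := by
  have hcoef : 0 ≤ 1 / μ - 1 := by
    rw [sub_nonneg, le_div_iff₀ hμ0]
    linarith
  have hX : (H + (1 / μ - 1) • (Aᵀ * A)).PosDef := by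
    simpa only [conjTranspose_eq_transpose_of_trivial] using
      hH.add_posSemidef ((posSemidef_conjTranspose_mul_self A).smul hcoef)
  have hAT : Function.Injective Aᵀ.mulVec := by
    simpa only [funext (mulVec_transpose A)] using
      vecMul_injective_of_rank_eq_card (by rw [hA, Fintype.card_fin])
  have hQ := hX.fromBlocks_add_conjTranspose_mul (H + (1 / μ) • (Aᵀ * A)) hAT
  simp only [conjTranspose_eq_transpose_of_trivial, transpose_transpose] at hQ
  refine (congrArg PosDef ?_).mp hQ
  congr 1
  · abel
  · rw [transpose_add, transpose_smul, transpose_mul, transpose_transpose, Matrix.add_mul,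
      Matrix.smul_mul]
  · rw [Matrix.mul_add, Matrix.mul_smul, Matrix.mul_assoc]
end

section
/- Let f : ℝⁿ → ℝ be convex and G = {x : g(x) ≤ 0} with g having convex components. Suppose x* minimizes f over {x : Ax = b} ∩ G, there exists (λ*, ν*) ∈ ℝᵖ × ℝ^m with ν* ≥ 0 such that 0 ∈ ∂f(x*) + Aᵀλ* + Σ_k ν*_k ∂g_k(x*), ν*_k g_k(x*) = 0 for all k, Ax* = b and g(x*) ≤ 0. Then for any κ ≥ ‖ν*‖_∞ and μ > 0, the pair (x*, λ*) is a saddle point of L(x,λ) = f(x) + (1/(2μ))‖Ax−b‖² + ⟨λ, Ax−b⟩ + κ Σ_k max{0, g_k(x)}. -/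
/-!
The subgradient inequalities for `f` and the `g k`, combined with the stationarity condition,
give `f x* ≤ f x + ⟨λ*, Ax - b⟩ + Σ_k ν*_k g_k(x)` for every `x`, once complementary slackness
removes the terms `ν*_k g_k(x*)`. Since `0 ≤ ν*_k ≤ κ`, each `ν*_k g_k(x)` is at most
`κ max{0, g_k(x)}`, and the quadratic term is nonnegative, so `L(x*, λ*) = f x* ≤ L(x, λ*)`.
At `x*` the residual `Ax* - b` vanishes and `g(x*) ≤ 0`, so `L(x*, ·)` is constant.
-/

open Matrix

lemma mul_le_mul_max_zero {ν κ t : ℝ} (hν : 0 ≤ ν) (hκ : ν ≤ κ) : ν * t ≤ κ * max 0 t := by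
  rcases le_total 0 t with ht | ht
  · rw [max_eq_right ht]
    exact mul_le_mul_of_nonneg_right hκ ht
  · rw [max_eq_left ht, mul_zero]
    exact mul_nonpos_of_nonneg_of_nonpos hν ht

lemma mul_le_mul_max_zero_of_le_add {ν κ c d t : ℝ} (hν : 0 ≤ ν) (hκ : ν ≤ κ)
    (hcs : ν * c = 0) (hle : c + d ≤ t) : ν * d ≤ κ * max 0 t :=
  calc ν * d = ν * (c + d) := by rw [mul_add, hcs, zero_add]
    _ ≤ ν * t := mul_le_mul_of_nonneg_left hle hν
    _ ≤ κ * max 0 t := mul_le_mul_max_zero hν hκ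

section Subgradient

variable {n ι : Type*} [Fintype n] [Fintype ι]

lemma sum_smul_dotProduct_le_mul_sum_max_zero {g : ι → (n → ℝ) → ℝ} {ξ : ι → n → ℝ}
    {ν : ι → ℝ} {κ : ℝ} {xs : n → ℝ} (hν : ∀ k, 0 ≤ ν k) (hκ : ∀ k, ν k ≤ κ)
    (hcs : ∀ k, ν k * g k xs = 0) (hξ : ∀ k y, g k y ≥ g k xs + ξ k ⬝ᵥ (y - xs)) (x : n → ℝ) :
    (∑ k, ν k • ξ k) ⬝ᵥ (x - xs) ≤ κ * ∑ k, max 0 (g k x) := by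
  rw [sum_dotProduct, Finset.mul_sum]
  refine Finset.sum_le_sum fun k _ => ?_
  rw [smul_dotProduct, smul_eq_mul]
  exact mul_le_mul_max_zero_of_le_add (hν k) (hκ k) (hcs k) (hξ k x)

lemma dotProduct_mulVec_sub_of_mulVec_eq {p : Type*} [Fintype p] {A : Matrix p n ℝ}
    {b : p → ℝ} {xs : n → ℝ} (hxs : A *ᵥ xs = b) (lam : p → ℝ) (x : n → ℝ) :
    lam ⬝ᵥ (A *ᵥ x - b) = Aᵀ *ᵥ lam ⬝ᵥ (x - xs) := by
  rw [← hxs, ← mulVec_sub, dotProduct_mulVec, mulVec_transpose]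

theorem le_add_dotProduct_add_mul_sum_max_zero_of_kkt {p : Type*} [Fintype p]
    {f : (n → ℝ) → ℝ} {g : ι → (n → ℝ) → ℝ} {A : Matrix p n ℝ} {b : p → ℝ}
    {xs : n → ℝ} {lam : p → ℝ} {ν : ι → ℝ} {κ : ℝ} {ξf : n → ℝ} {ξg : ι → n → ℝ}
    (hξf : ∀ y, f y ≥ f xs + ξf ⬝ᵥ (y - xs)) (hξg : ∀ k y, g k y ≥ g k xs + ξg k ⬝ᵥ (y - xs))
    (hstat : ξf + Aᵀ *ᵥ lam + ∑ k, ν k • ξg k = 0) (hν : ∀ k, 0 ≤ ν k) (hκ : ∀ k, ν k ≤ κ)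
    (hcs : ∀ k, ν k * g k xs = 0) (hxs : A *ᵥ xs = b) (x : n → ℝ) :
    f xs ≤ f x + lam ⬝ᵥ (A *ᵥ x - b) + κ * ∑ k, max 0 (g k x) := by
  have hsum : ξf ⬝ᵥ (x - xs) + Aᵀ *ᵥ lam ⬝ᵥ (x - xs) + (∑ k, ν k • ξg k) ⬝ᵥ (x - xs) = 0 := by
    rw [← add_dotProduct, ← add_dotProduct, hstat, zero_dotProduct]
  have hpen := sum_smul_dotProduct_le_mul_sum_max_zero hν hκ hcs hξg x
  rw [dotProduct_mulVec_sub_of_mulVec_eq hxs]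
  linarith [hξf x]

end Subgradient

theorem kkt_implies_saddle_point_general {n p m : ℕ}
    (f : (Fin n → ℝ) → ℝ)
    (g : Fin m → (Fin n → ℝ) → ℝ)
    (A : Matrix (Fin p) (Fin n) ℝ) (b : Fin p → ℝ)
    (xs : Fin n → ℝ) (lams : Fin p → ℝ) (nus : Fin m → ℝ)
    (hnus : ∀ k, 0 ≤ nus k)
    (hstat : ∃ ξf : Fin n → ℝ, (∀ y, f y ≥ f xs + ξf ⬝ᵥ (y - xs)) ∧
      ∃ ξg : Fin m → (Fin n → ℝ),
        (∀ k, ∀ y, g k y ≥ g k xs + ξg k ⬝ᵥ (y - xs)) ∧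
        ξf + Aᵀ.mulVec lams + ∑ k, nus k • ξg k = 0)
    (hcs : ∀ k, nus k * g k xs = 0)
    (hfeas₁ : A.mulVec xs = b) (hfeas₂ : ∀ k, g k xs ≤ 0)
    (κ μ : ℝ) (hκ : ∀ k, nus k ≤ κ) (hμ : 0 < μ)
    (L : (Fin n → ℝ) → (Fin p → ℝ) → ℝ)
    (hL : ∀ x lam, L x lam = f x
      + (1 / (2 * μ)) * ((A.mulVec x - b) ⬝ᵥ (A.mulVec x - b))
      + lam ⬝ᵥ (A.mulVec x - b)
      + κ * ∑ k, max 0 (g k x)) :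
    (∀ lam, L xs lam ≤ L xs lams) ∧ (∀ x, L xs lams ≤ L x lams) := by
  obtain ⟨ξf, hξf, ξg, hξg, hsum⟩ := hstat
  have hLxs : ∀ lam, L xs lam = f xs := fun lam => by
    simp [hL, hfeas₁, max_eq_left (hfeas₂ _)]
  refine ⟨fun lam => by rw [hLxs, hLxs], fun x => ?_⟩
  have hquad : 0 ≤ 1 / (2 * μ) * ((A *ᵥ x - b) ⬝ᵥ (A *ᵥ x - b)) :=
    mul_nonneg (by positivity) (Finset.sum_nonneg fun i _ => mul_self_nonneg _)
  have hdual := le_add_dotProduct_add_mul_sum_max_zero_of_kkt hξf hξg hsum hnus hκ hcs hfeas₁ x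
  rw [hLxs, hL]
  linarith

theorem kkt_implies_saddle_point {n p m : ℕ}
    (f : (Fin n → ℝ) → ℝ) (hf : ConvexOn ℝ Set.univ f)
    (g : Fin m → (Fin n → ℝ) → ℝ) (hg : ∀ k, ConvexOn ℝ Set.univ (g k))
    (A : Matrix (Fin p) (Fin n) ℝ) (b : Fin p → ℝ)
    (xs : Fin n → ℝ) (lams : Fin p → ℝ) (nus : Fin m → ℝ)
    (hmin : ∀ x, A.mulVec x = b → (∀ k, g k x ≤ 0) → f xs ≤ f x)
    (hnus : ∀ k, 0 ≤ nus k)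
    (hstat : ∃ ξf : Fin n → ℝ, (∀ y, f y ≥ f xs + ξf ⬝ᵥ (y - xs)) ∧
      ∃ ξg : Fin m → (Fin n → ℝ),
        (∀ k, ∀ y, g k y ≥ g k xs + ξg k ⬝ᵥ (y - xs)) ∧
        ξf + Aᵀ.mulVec lams + ∑ k, nus k • ξg k = 0)
    (hcs : ∀ k, nus k * g k xs = 0)
    (hfeas₁ : A.mulVec xs = b) (hfeas₂ : ∀ k, g k xs ≤ 0)
    (κ μ : ℝ) (hκ : ∀ k, nus k ≤ κ) (hμ : 0 < μ)
    (L : (Fin n → ℝ) → (Fin p → ℝ) → ℝ)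
    (hL : ∀ x lam, L x lam = f x
      + (1 / (2 * μ)) * ((A.mulVec x - b) ⬝ᵥ (A.mulVec x - b))
      + lam ⬝ᵥ (A.mulVec x - b)
      + κ * ∑ k, max 0 (g k x)) :
    (∀ lam, L xs lam ≤ L xs lams) ∧ (∀ x, L xs lams ≤ L x lams) :=
  kkt_implies_saddle_point_general f g A b xs lams nus hnus hstat hcs hfeas₁ hfeas₂ κ μ hκ hμ L hL
end

section
/- Let f : ℝⁿ → ℝ be continuously differentiable with ∇f locally Lipschitz, and suppose every matrix in the generalized Hessian ∂(∇f)(x) is positive semidefinite with all eigenvalues at least m > 0, for every x. Then for all x, y ∈ ℝⁿ: ⟨x − y, ∇f(x) − ∇f(y)⟩ ≥ m‖x − y‖². -/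
/-! Rademacher's theorem makes `f'` differentiable almost everywhere, and by Fubini almost every
line `b + ℝ (x - y)` meets the non-differentiability set in a null set. Along such a line
`t ↦ ⟪f' (b + t (x - y)), x - y⟫` is locally Lipschitz, hence absolutely continuous, and at almost
every `t` its derivative is `⟪J (x - y), x - y⟫ ≥ m ‖x - y‖²`, where the Jacobian `J` lies in the
generalized Hessian. The fundamental theorem of calculus gives the inequality at almost every base
point `b`; such points are dense and the inequality is closed in `b`, so it holds at `b = y`. -/

open scoped RealInnerProductSpace
open Filter

/-- The generalized Hessian of a `C¹` function with locally Lipschitz gradient `f'`: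
the convex hull of all limits of Hessians (Jacobians of `f'`) at nearby points of
differentiability of `f'`. -/
def genHessian {n : ℕ} (f' : EuclideanSpace ℝ (Fin n) → EuclideanSpace ℝ (Fin n))
    (x : EuclideanSpace ℝ (Fin n)) : Set (Matrix (Fin n) (Fin n) ℝ) :=
  convexHull ℝ {H : Matrix (Fin n) (Fin n) ℝ |
    ∃ (u : ℕ → EuclideanSpace ℝ (Fin n)) (Hs : ℕ → Matrix (Fin n) (Fin n) ℝ),
      Tendsto u atTop (nhds x) ∧ Tendsto Hs atTop (nhds H) ∧
      ∀ i, HasFDerivAt f'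
        (LinearMap.toContinuousLinearMap (Matrix.toEuclideanLin (Hs i))) (u i)}

open MeasureTheory Metric Set

theorem LocallyLipschitz.ae_differentiableAt {E F : Type*} [NormedAddCommGroup E]
    [NormedSpace ℝ E] [FiniteDimensional ℝ E] [MeasurableSpace E] [BorelSpace E]
    [NormedAddCommGroup F] [NormedSpace ℝ F] [FiniteDimensional ℝ F]
    {μ : Measure E} [μ.IsAddHaarMeasure] {f : E → F} (hf : LocallyLipschitz f) :
    ∀ᵐ x ∂μ, DifferentiableAt ℝ f x := by
  have hball (k : ℕ) : ∀ᵐ x ∂μ, x ∈ ball (0 : E) k → DifferentiableAt ℝ f x := by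
    obtain ⟨K, hK⟩ := hf.locallyLipschitzOn.exists_lipschitzOnWith_of_compact
      (isCompact_closedBall (0 : E) k)
    filter_upwards [(hK.mono ball_subset_closedBall).ae_differentiableWithinAt_of_mem (μ := μ)]
      with x hx hxk
    exact (hx hxk).differentiableAt (isOpen_ball.mem_nhds hxk)
  filter_upwards [ae_all_iff.2 hball] with x hx
  obtain ⟨k, hk⟩ := exists_nat_gt ‖x‖
  exact hx k (mem_ball_zero_iff.2 hk)

theorem ae_ae_add_smul {E : Type*} [NormedAddCommGroup E] [NormedSpace ℝ E]
    [MeasurableSpace E] [BorelSpace E] {μ : Measure E} [μ.IsAddRightInvariant] [SFinite μ]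
    {p : E → Prop} (hp : ∀ᵐ z ∂μ, p z) (d : E) :
    ∀ᵐ b ∂μ, ∀ᵐ t : ℝ, p (b + t • d) := by
  set N := toMeasurable μ {z | ¬ p z}
  have hN : μ N = 0 := by rw [measure_toMeasurable]; exact hp
  suffices h : ∀ᵐ b ∂μ, ∀ᵐ t : ℝ, b + t • d ∉ N by
    filter_upwards [h] with b hb
    filter_upwards [hb] with t ht
    by_contra hpt
    exact ht (subset_toMeasurable μ _ hpt)
  have hmeas : MeasurableSet {q : E × ℝ | q.1 + q.2 • d ∉ N} :=
    ((measurableSet_toMeasurable μ _).preimage (by fun_prop : Continuous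
      fun q : E × ℝ => q.1 + q.2 • d).measurable).compl
  rw [Measure.ae_ae_comm hmeas]
  refine Eventually.of_forall fun t => ?_
  simp only [ae_iff, not_not]
  exact (measure_preimage_add_right μ (t • d) N).trans hN

theorem AbsolutelyContinuousOnInterval.mul_sub_le_sub_of_ae_le_deriv {φ : ℝ → ℝ} {a b c : ℝ}
    (hφ : AbsolutelyContinuousOnInterval φ a b) (hab : a ≤ b)
    (h : ∀ᵐ t, t ∈ Icc a b → c ≤ deriv φ t) :
    c * (b - a) ≤ φ b - φ a := by
  calc c * (b - a) = ∫ _ in a..b, c := by simp [mul_comm]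
    _ ≤ ∫ t in a..b, deriv φ t :=
      intervalIntegral.integral_mono_ae_restrict hab intervalIntegrable_const
        hφ.intervalIntegrable_deriv ((ae_restrict_iff' measurableSet_Icc).2 h)
    _ = φ b - φ a := hφ.integral_deriv_eq_sub

theorem LocallyLipschitz.le_inner_sub_of_ae_le_inner_fderiv {E : Type*} [NormedAddCommGroup E]
    [InnerProductSpace ℝ E] {g : E → E} (hg : LocallyLipschitz g) {c : ℝ} {b d : E}
    (h : ∀ᵐ t : ℝ, t ∈ Icc (0 : ℝ) 1 →
      DifferentiableAt ℝ g (b + t • d) ∧ c ≤ ⟪fderiv ℝ g (b + t • d) d, d⟫) :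
    c ≤ ⟪g (b + d) - g b, d⟫ := by
  set φ : ℝ → ℝ := fun t => ⟪g (b + t • d), d⟫
  have hφ : LocallyLipschitz φ :=
    (innerSLFlip ℝ d).lipschitz.locallyLipschitz.comp
      (hg.comp (by fun_prop : ContDiff ℝ 1 fun t : ℝ => b + t • d).locallyLipschitz)
  obtain ⟨K, hK⟩ := hφ.locallyLipschitzOn.exists_lipschitzOnWith_of_compact
    (isCompact_uIcc (a := (0 : ℝ)) (b := 1))
  have key : c * (1 - 0) ≤ φ 1 - φ 0 :=
    hK.absolutelyContinuousOnInterval.mul_sub_le_sub_of_ae_le_deriv zero_le_one ?_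
  · simpa [φ, inner_sub_left] using key
  filter_upwards [h] with t ht htI
  obtain ⟨hdiff, hc⟩ := ht htI
  have hderiv : HasDerivAt φ ⟪fderiv ℝ g (b + t • d) d, d⟫ t := by
    simpa using (hdiff.hasFDerivAt.comp_hasDerivAt t
      (((hasDerivAt_id t).smul_const d).const_add b)).inner ℝ (hasDerivAt_const t d)
  rwa [hderiv.deriv]

theorem toEuclideanLin_symm_fderiv_mem_genHessian {n : ℕ}
    {f' : EuclideanSpace ℝ (Fin n) → EuclideanSpace ℝ (Fin n)} {p : EuclideanSpace ℝ (Fin n)}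
    (h : DifferentiableAt ℝ f' p) :
    Matrix.toEuclideanLin.symm (fderiv ℝ f' p : _ →ₗ[ℝ] _) ∈ genHessian f' p :=
  subset_convexHull ℝ _ ⟨fun _ => p, fun _ => _, tendsto_const_nhds, tendsto_const_nhds,
    fun _ => by convert h.hasFDerivAt using 1; ext1 v; simp⟩

theorem strong_monotonicity_from_generalized_hessian_general {n : ℕ}
    (f' : EuclideanSpace ℝ (Fin n) → EuclideanSpace ℝ (Fin n))
    (hlip : LocallyLipschitz f')
    (m : ℝ)
    (hH : ∀ x, ∀ H ∈ genHessian f' x, ∀ v : EuclideanSpace ℝ (Fin n),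
      m * ‖v‖ ^ 2 ≤ ⟪Matrix.toEuclideanLin H v, v⟫) :
    ∀ x y : EuclideanSpace ℝ (Fin n),
      ⟪x - y, f' x - f' y⟫ ≥ m * ‖x - y‖ ^ 2 := by
  intro x y
  have hlines : ∀ᵐ b, ∀ᵐ t : ℝ, DifferentiableAt ℝ f' (b + t • (x - y)) :=
    ae_ae_add_smul hlip.ae_differentiableAt (x - y)
  have hgood : ∀ᵐ b, m * ‖x - y‖ ^ 2 ≤ ⟪f' (b + (x - y)) - f' b, x - y⟫ := by
    filter_upwards [hlines] with b hb
    refine hlip.le_inner_sub_of_ae_le_inner_fderiv ?_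
    filter_upwards [hb] with t ht _
    refine ⟨ht, ?_⟩
    simpa using hH _ _ (toEuclideanLin_symm_fderiv_mem_genHessian ht) (x - y)
  have hclosed : IsClosed {b | m * ‖x - y‖ ^ 2 ≤ ⟪f' (b + (x - y)) - f' b, x - y⟫} :=
    isClosed_le continuous_const (by have := hlip.continuous; fun_prop)
  have hy := hclosed.closure_subset (Measure.dense_of_ae hgood y)
  simpa [real_inner_comm] using hy

theorem strong_monotonicity_from_generalized_hessian {n : ℕ}
    (f : EuclideanSpace ℝ (Fin n) → ℝ)
    (f' : EuclideanSpace ℝ (Fin n) → EuclideanSpace ℝ (Fin n))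
    (hgrad : ∀ x, HasGradientAt f (f' x) x)
    (hlip : LocallyLipschitz f')
    (m : ℝ) (hm : 0 < m)
    (hH : ∀ x, ∀ H ∈ genHessian f' x, ∀ v : EuclideanSpace ℝ (Fin n),
      m * ‖v‖ ^ 2 ≤ ⟪Matrix.toEuclideanLin H v, v⟫) :
    ∀ x y : EuclideanSpace ℝ (Fin n),
      ⟪x - y, f' x - f' y⟫ ≥ m * ‖x - y‖ ^ 2 :=
  strong_monotonicity_from_generalized_hessian_general f' hlip m hH
end
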